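/- Let λ, μ, p, ν₁, ν₂ > 0 and let n be a positive integer. Define r₀⁽ⁿ⁾ = λpν₁/(nμ(λ + ν₁ + nμ)), r₁⁽ⁿ⁾ = λp(λ + nμ)/(nμ(λ + ν₁ + nμ)), and r₂⁽ⁿ⁾ = [λp((λ + nμ)² + nμν₁)/(nμ(ν₂(λ + ν₁ + (n+1)μ) + λpν₁))]·[(λ + ν₁ + (n+1)μ)/(λ + ν₁ + nμ)]. Then r₀⁽ⁿ⁾ + r₁⁽ⁿ⁾ = λp/(nμ), and λ·r₁⁽ⁿ⁾ - (λp + ν₂ - (n+1)μ·r₁⁽ⁿ⁺¹⁾)·r₂⁽ⁿ⁾ = -λp. -/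

import Mathlib

/-! With `s = nμ` the total service rate, `(n + 1)μ r₁⁽ⁿ⁺¹⁾` cancels the factor `(n + 1)μ`, and the
bracket `λp + ν₂ - (n + 1)μ r₁⁽ⁿ⁺¹⁾` collapses to `(ν₂ c + λpν₁) / c` with `c = λ + ν₁ + (n + 1)μ`.
This is exactly the reciprocal of the `c`-dependent part of `r₂⁽ⁿ⁾`, so the boundary identity reduces
to `λ(λ + s) - (λ + s)² - sν₁ = -s(λ + ν₁ + s)`. The level `n + 1` enters only through `c`, so the
identities hold for arbitrary service rates `s` and `t` in place of `nμ` and `(n + 1)μ`. -/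

namespace RetrialQueue

variable (lam p nu1 nu2 : ℝ)

theorem r0_add_r1 (s : ℝ) (hc : lam + nu1 + s ≠ 0) :
    lam * p * nu1 / (s * (lam + nu1 + s)) + lam * p * (lam + s) / (s * (lam + nu1 + s)) =
      lam * p / s := by
  rw [← add_div, ← mul_div_mul_right (lam * p) s hc]
  ring_nf

theorem add_sub_mul_r1 (t : ℝ) (ht : t ≠ 0) (hc : lam + nu1 + t ≠ 0) :
    lam * p + nu2 - t * (lam * p * (lam + t) / (t * (lam + nu1 + t))) =
      (nu2 * (lam + nu1 + t) + lam * p * nu1) / (lam + nu1 + t) := by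
  field_simp
  ring

theorem boundary_identity (s t : ℝ) (hs : s ≠ 0) (ht : t ≠ 0) (hcs : lam + nu1 + s ≠ 0)
    (hct : lam + nu1 + t ≠ 0) (hd : nu2 * (lam + nu1 + t) + lam * p * nu1 ≠ 0) :
    lam * (lam * p * (lam + s) / (s * (lam + nu1 + s))) -
        (lam * p + nu2 - t * (lam * p * (lam + t) / (t * (lam + nu1 + t)))) *
          (lam * p * ((lam + s) ^ 2 + s * nu1) / (s * (nu2 * (lam + nu1 + t) + lam * p * nu1)) *
            ((lam + nu1 + t) / (lam + nu1 + s))) =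
      -(lam * p) := by
  have hprod :
      (nu2 * (lam + nu1 + t) + lam * p * nu1) / (lam + nu1 + t) *
          (lam * p * ((lam + s) ^ 2 + s * nu1) / (s * (nu2 * (lam + nu1 + t) + lam * p * nu1)) *
            ((lam + nu1 + t) / (lam + nu1 + s))) =
        lam * p * ((lam + s) ^ 2 + s * nu1) / (s * (lam + nu1 + s)) := by
    rw [div_mul_div_comm, div_mul_div_comm, div_eq_div_iff (by simp [*]) (by simp [*])]
    ring
  rw [add_sub_mul_r1 lam p nu1 nu2 t ht hct, hprod]
  field_simp
  ring

end RetrialQueue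

open RetrialQueue in
theorem stmt_1 (lam mu p nu1 nu2 : ℝ) (hlam : 0 < lam) (hmu : 0 < mu) (hp : 0 < p)
    (hnu1 : 0 < nu1) (hnu2 : 0 < nu2) (n : ℕ) (hn : 1 ≤ n)
    (r0 r1 r2 : ℕ → ℝ)
    (hr0 : ∀ m, r0 m = lam * p * nu1 / (m * mu * (lam + nu1 + m * mu)))
    (hr1 : ∀ m, r1 m = lam * p * (lam + m * mu) / (m * mu * (lam + nu1 + m * mu)))
    (hr2 : ∀ m, r2 m =
      lam * p * ((lam + m * mu) ^ 2 + m * mu * nu1) /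
        (m * mu * (nu2 * (lam + nu1 + (m + 1) * mu) + lam * p * nu1)) *
        ((lam + nu1 + (m + 1) * mu) / (lam + nu1 + m * mu))) :
    r0 n + r1 n = lam * p / (n * mu) ∧
    lam * r1 n - (lam * p + nu2 - (n + 1) * mu * r1 (n + 1)) * r2 n = -(lam * p) := by
  have hn' : (0 : ℝ) < n := by exact_mod_cast hn
  refine ⟨?_, ?_⟩
  · rw [hr0, hr1]
    exact r0_add_r1 lam p nu1 _ (by positivity)
  · rw [hr1 n, hr1 (n + 1), hr2 n]
    push_cast
    exact boundary_identity lam p nu1 nu2 _ _ (by positivity) (by positivity) (by positivity)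
      (by positivity) (by positivity)
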